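/- Let λ ∈ X and let v ∈ W be an element of minimal length ℓ(v) such that vλ is dominant. Then v t_λ = t_{vλ} v in W_aff, and ℓ(v t_λ) = ℓ(t_λ) − ℓ(v). -/

import Mathlib

open scoped BigOperators

/-- The multiplicative group structure on `AddAut M` that Mathlib provided in December 2024
(composition as multiplication, `(g * h) x = g (h x)`); Mathlib now makes `AddAut M` an additive
group instead. -/
instance addAutGroupCompat {M : Type*} [Add M] : Group (AddAut M) where
  mul g h := AddEquiv.trans h g
  one := AddEquiv.refl _
  inv := AddEquiv.symm
  mul_assoc _ _ _ := rfl
  one_mul _ := rfl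
  mul_one _ := rfl
  inv_mul_cancel := AddEquiv.self_trans_symm

/-- The data of a finite reduced crystallographic root system `Φ`, with a chosen system of
positive roots `pos` cut out by a homomorphism `f : X → ℝ` not vanishing on any root, inside a
finitely generated free abelian group `X` (the weight lattice).  For each root `α` we record its
coroot `coroot α : X →+ ℤ` and the associated reflection `s α : x ↦ x - ⟨x, α∨⟩ • α`, an
automorphism of `X`.  The reflections preserve `Φ` and the coroots are equivariant for them. -/
structure RootSystemData (X : Type*) [AddCommGroup X] [Module.Free ℤ X] [Module.Finite ℤ X] where
  /-- the (finite) set of roots -/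
  Φ : Finset X
  /-- the set of positive roots -/
  pos : Finset X
  /-- the coroot attached to each root, as a homomorphism `X → ℤ` -/
  coroot : X → (X →+ ℤ)
  /-- the reflection attached to each root -/
  s : X → AddAut X
  /-- a homomorphism `X → ℝ` cutting out the positive roots -/
  f : X →+ ℝ
  f_ne : ∀ α ∈ Φ, f α ≠ 0
  pos_def : ∀ α, α ∈ pos ↔ α ∈ Φ ∧ 0 < f α
  pairing_self : ∀ α ∈ Φ, coroot α α = 2
  s_apply : ∀ α ∈ Φ, ∀ x : X, s α x = x - coroot α x • α
  s_stable : ∀ α ∈ Φ, ∀ β ∈ Φ, s α β ∈ Φ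
  reduced : ∀ α ∈ Φ, ∀ n : ℤ, n • α ∈ Φ → n = 1 ∨ n = -1
  coroot_equivariant : ∀ α ∈ Φ, ∀ β ∈ Φ, ∀ x : X, coroot (s α β) x = coroot β ((s α)⁻¹ x)

namespace RootSystemData

variable {X : Type*} [AddCommGroup X] [Module.Free ℤ X] [Module.Finite ℤ X] [DecidableEq X]
  (R : RootSystemData X)

/-- The Weyl group `W`, the subgroup of `Aut(X)` generated by the reflections `s_α`, `α ∈ Φ`. -/
def W : Subgroup (AddAut X) := Subgroup.closure (R.s '' ↑R.Φ)

/-- A weight `λ` is dominant if `⟨λ, α∨⟩ ≥ 0` for all positive roots `α`. -/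
def IsDominant (lam : X) : Prop := ∀ α ∈ R.pos, 0 ≤ R.coroot α lam

/-- `ℓ(u) = #{α ∈ Φ⁺ : uα ∈ −Φ⁺}` for `u` in the (finite) Weyl group. -/
def lenW (u : AddAut X) : ℕ := (R.pos.filter (fun α => -(u α) ∈ R.pos)).card

/-- The Iwahori–Matsumoto length of the element `u t_λ` of the extended affine Weyl group
`W_aff = W ⋉ X`:
`ℓ(u t_λ) = Σ_{α ∈ Φ⁺ ∩ u⁻¹(Φ⁺)} |⟨λ, α∨⟩| + Σ_{α ∈ Φ⁺ ∩ u⁻¹(−Φ⁺)} |1 + ⟨λ, α∨⟩|`. -/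
def lenAff (u : AddAut X) (lam : X) : ℕ :=
  ∑ α ∈ R.pos.filter (fun α => u α ∈ R.pos), (R.coroot α lam).natAbs
    + ∑ α ∈ R.pos.filter (fun α => -(u α) ∈ R.pos), (1 + R.coroot α lam).natAbs

/-- The length of the translation `t_λ`: `ℓ(t_λ) = Σ_{α ∈ Φ⁺} |⟨λ, α∨⟩|`. -/
def lenT (lam : X) : ℕ := ∑ α ∈ R.pos, (R.coroot α lam).natAbs

end RootSystemData

/-- Multiplication in the extended affine Weyl group `W_aff = W ⋉ X`, where the pair `(u, λ)`
(with `u` an automorphism of `X` lying in `W`) represents the element `u t_λ`: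
`(u t_λ)(v t_μ) = (uv) t_{v⁻¹λ + μ}`, using `t_λ v = v t_{v⁻¹ λ}`
(equivalently `u t_λ u⁻¹ = t_{uλ}`). -/
def waffMul {X : Type*} [AddCommGroup X] (p q : AddAut X × X) : AddAut X × X :=
  (p.1 * q.1, (q.1)⁻¹ p.2 + q.2)

/-! If `vα < 0` for a positive root `α`, dominance of `vλ` forces `⟨λ, α∨⟩ = ⟨vλ, (vα)∨⟩ ≤ 0`;
equality would make `v s_α` another element sending `λ` to `vλ`, and `ℓ(v s_α) < ℓ(v)` contradicts
minimality. So `|1 + ⟨λ, α∨⟩| = |⟨λ, α∨⟩| - 1` on the `ℓ(v)` inversions of `v`, which is the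
length formula.

The inequality `ℓ(w s_β) < ℓ(w)` for `β > 0`, `wβ < 0` is proved by counting inversions: with `N`
the inversion set of `s_β`, `s_β` matches the inversions of `w s_β` and of `w` outside `N`, while
`α ↦ -s_β α` matches the inversions of `w s_β` in `N` with the non-inversions of `w` in `N` and
sends these injectively to inversions of `w` in `N` other than `β`. -/

namespace addAutGroupCompat

variable {M : Type*} [Add M] (g h : AddAut M) (x : M)

@[simp] lemma mul_apply : (g * h) x = g (h x) := rfl

@[simp] lemma inv_apply_self : g⁻¹ (g x) = x := g.symm_apply_apply x

@[simp] lemma apply_inv_self : g (g⁻¹ x) = x := g.apply_symm_apply x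

end addAutGroupCompat

namespace RootSystemData

variable {X : Type*} [AddCommGroup X] [Module.Free ℤ X] [Module.Finite ℤ X] (R : RootSystemData X)

section Roots

variable {α γ : X}

lemma pos_subset : R.pos ⊆ R.Φ := fun α h => ((R.pos_def α).1 h).1

lemma mem_pos_iff (hγ : γ ∈ R.Φ) : γ ∈ R.pos ↔ 0 < R.f γ := by
  rw [R.pos_def, and_iff_right hγ]

lemma s_s_apply (hα : α ∈ R.Φ) (x : X) : R.s α (R.s α x) = x := by
  rw [R.s_apply α hα x, R.s_apply α hα, map_sub, map_zsmul, R.pairing_self α hα, smul_eq_mul]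
  module

lemma s_self (hα : α ∈ R.Φ) : R.s α α = -α := by
  rw [R.s_apply α hα, R.pairing_self α hα, two_smul]
  abel

lemma neg_mem (hα : α ∈ R.Φ) : -α ∈ R.Φ := R.s_self hα ▸ R.s_stable α hα α hα

lemma neg_mem_pos_iff (hγ : γ ∈ R.Φ) : -γ ∈ R.pos ↔ R.f γ < 0 := by
  rw [R.mem_pos_iff (R.neg_mem hγ), map_neg, neg_pos]

lemma neg_notMem_pos (hγ : γ ∈ R.pos) : -γ ∉ R.pos := fun h => by
  have := ((R.pos_def _).1 h).2
  rw [map_neg] at this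
  linarith [((R.pos_def _).1 hγ).2]

lemma mem_pos_or_neg_mem_pos (hγ : γ ∈ R.Φ) : γ ∈ R.pos ∨ -γ ∈ R.pos := by
  rw [R.mem_pos_iff hγ, R.neg_mem_pos_iff hγ]
  exact (R.f_ne γ hγ).gt_or_lt

lemma neg_mem_pos_iff_notMem_pos (hγ : γ ∈ R.Φ) : -γ ∈ R.pos ↔ γ ∉ R.pos :=
  ⟨fun h hγ' => R.neg_notMem_pos hγ' h, (R.mem_pos_or_neg_mem_pos hγ).resolve_left⟩

end Roots

section WeylGroup

open addAutGroupCompat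

variable {w : AddAut X} {α β : X}

lemma s_mem_W (hα : α ∈ R.Φ) : R.s α ∈ R.W := Subgroup.subset_closure ⟨α, hα, rfl⟩

lemma map_mem_iff (hw : w ∈ R.W) (α : X) : w α ∈ R.Φ ↔ α ∈ R.Φ := by
  induction hw using Subgroup.closure_induction generalizing α with
  | mem w hw =>
    obtain ⟨β, hβ, rfl⟩ := hw
    exact ⟨fun h => R.s_s_apply hβ α ▸ R.s_stable β hβ _ h, R.s_stable β hβ α⟩
  | one => exact Iff.rfl
  | mul u w _ _ hu hw => rw [mul_apply, hu, hw]
  | inv w _ hw => rw [← hw, apply_inv_self]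

lemma coroot_map (hw : w ∈ R.W) (hβ : β ∈ R.Φ) (x : X) :
    R.coroot (w β) (w x) = R.coroot β x := by
  induction hw using Subgroup.closure_induction generalizing β x with
  | mem w hw =>
    obtain ⟨α, hα, rfl⟩ := hw
    rw [R.coroot_equivariant α hα β hβ, inv_apply_self]
  | one => rfl
  | mul u w _ hw ihu ihw => rw [mul_apply, mul_apply, ihu ((R.map_mem_iff hw β).2 hβ), ihw hβ]
  | inv w hw ih =>
    rw [← ih ((R.map_mem_iff (inv_mem hw) β).2 hβ) (w⁻¹ x), apply_inv_self, apply_inv_self]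

lemma coroot_neg (hα : α ∈ R.Φ) (x : X) : R.coroot (-α) x = -R.coroot α x := by
  have := R.coroot_map (R.s_mem_W hα) hα (R.s α x)
  rw [R.s_self hα, R.s_s_apply hα] at this
  rw [this, R.s_apply α hα, map_sub, map_zsmul, R.pairing_self α hα, smul_eq_mul]
  ring

end WeylGroup

section Inversions

open addAutGroupCompat

variable [DecidableEq X] {w : AddAut X} {α β : X}

def inversions (w : AddAut X) : Finset X := R.pos.filter fun α => -(w α) ∈ R.pos

lemma lenW_eq_card_inversions (w : AddAut X) : R.lenW w = (R.inversions w).card := rfl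

@[simp] lemma mem_inversions : α ∈ R.inversions w ↔ α ∈ R.pos ∧ -(w α) ∈ R.pos :=
  Finset.mem_filter

lemma notMem_inversions_iff (hw : w ∈ R.W) (hα : α ∈ R.pos) :
    α ∉ R.inversions w ↔ w α ∈ R.pos := by
  rw [mem_inversions, R.neg_mem_pos_iff_notMem_pos ((R.map_mem_iff hw α).2 (R.pos_subset hα)),
    not_and, not_not]
  exact ⟨fun h => h hα, fun h _ => h⟩

lemma mem_sdiff_inversions_iff (hw : w ∈ R.W) {u : AddAut X} :
    α ∈ R.inversions u \ R.inversions w ↔ α ∈ R.inversions u ∧ w α ∈ R.pos := by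
  rw [Finset.mem_sdiff, and_congr_right_iff]
  exact fun h => R.notMem_inversions_iff hw (R.mem_inversions.1 h).1

lemma card_inversions_mul_s_sdiff (hβ : β ∈ R.Φ) (w : AddAut X) :
    (R.inversions (w * R.s β) \ R.inversions (R.s β)).card =
      (R.inversions w \ R.inversions (R.s β)).card := by
  have hσ := R.s_mem_W hβ
  refine Finset.card_nbij' (R.s β) (R.s β) ?_ ?_ (fun α _ => R.s_s_apply hβ α)
    (fun α _ => R.s_s_apply hβ α)
  · intro α hα
    simp only [Finset.mem_coe, R.mem_sdiff_inversions_iff hσ, mem_inversions, mul_apply] at hα ⊢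
    exact ⟨⟨hα.2, hα.1.2⟩, by rw [R.s_s_apply hβ]; exact hα.1.1⟩
  · intro α hα
    simp only [Finset.mem_coe, R.mem_sdiff_inversions_iff hσ, mem_inversions, mul_apply,
      R.s_s_apply hβ] at hα ⊢
    exact ⟨⟨hα.2, hα.1.2⟩, hα.1.1⟩

lemma card_inversions_mul_s_inter (hw : w ∈ R.W) (hβ : β ∈ R.Φ) :
    (R.inversions (w * R.s β) ∩ R.inversions (R.s β)).card =
      (R.inversions (R.s β) \ R.inversions w).card := by
  have hσι : ∀ α, R.s β (-R.s β α) = -α := by simp [R.s_s_apply hβ]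
  have hι : ∀ α, -R.s β (-R.s β α) = α := by simp [hσι]
  refine Finset.card_nbij' (fun α => -R.s β α) (fun α => -R.s β α) ?_ ?_
    (fun α _ => hι α) (fun α _ => hι α)
  · intro α hα
    simp only [Finset.mem_coe, Finset.mem_inter, R.mem_sdiff_inversions_iff hw, mem_inversions,
      mul_apply, hσι, map_neg, neg_neg] at hα ⊢
    exact ⟨⟨hα.2.2, hα.2.1⟩, hα.1.2⟩
  · intro α hα
    simp only [Finset.mem_coe, Finset.mem_inter, R.mem_sdiff_inversions_iff hw, mem_inversions,
      mul_apply, hσι, map_neg, neg_neg] at hα ⊢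
    exact ⟨⟨hα.1.2, hα.2⟩, hα.1.2, hα.1.1⟩

lemma card_sdiff_inversions_lt (hw : w ∈ R.W) (hβ : β ∈ R.pos) (hwβ : -(w β) ∈ R.pos) :
    (R.inversions (R.s β) \ R.inversions w).card <
      (R.inversions w ∩ R.inversions (R.s β)).card := by
  have hβΦ := R.pos_subset hβ
  have hβN : β ∈ R.inversions w ∩ R.inversions (R.s β) := by simp [hβ, hwβ, R.s_self hβΦ]
  refine lt_of_le_of_lt (Finset.card_le_card_of_injOn (fun α => -R.s β α) ?_
    fun a _ b _ h => (R.s β).injective (neg_injective h)) (Finset.card_erase_lt_of_mem hβN)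
  intro α hα
  simp only [Finset.mem_coe, R.mem_sdiff_inversions_iff hw, mem_inversions] at hα
  obtain ⟨⟨hαP, hσα⟩, hwα⟩ := hα
  have hσαΦ : R.s β α ∈ R.Φ := R.s_stable β hβΦ α (R.pos_subset hαP)
  have hfσ : ∀ u : AddAut X, R.f (u (R.s β α)) = R.f (u α) - R.coroot β α * R.f (u β) := by
    intro u
    rw [R.s_apply β hβΦ, map_sub, map_sub, map_zsmul, map_zsmul, zsmul_eq_mul]
  -- `α - s_β α = ⟨α, β∨⟩ β` with `α > 0 > s_β α` and `β > 0`, so `⟨α, β∨⟩ > 0`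
  have hc : (0 : ℝ) < R.coroot β α := by
    have hfσα' : R.f (R.s β α) = R.f α - R.coroot β α * R.f β := hfσ 1
    have hfσα := (R.neg_mem_pos_iff hσαΦ).1 hσα
    have hfα := (R.mem_pos_iff (R.pos_subset hαP)).1 hαP
    have hfβ := (R.mem_pos_iff hβΦ).1 hβ
    nlinarith
  have hwσα : w (R.s β α) ∈ R.pos := by
    rw [R.mem_pos_iff ((R.map_mem_iff hw _).2 hσαΦ), hfσ w]
    have hfwα := (R.mem_pos_iff ((R.map_mem_iff hw α).2 (R.pos_subset hαP))).1 hwα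
    have hfwβ := (R.neg_mem_pos_iff ((R.map_mem_iff hw β).2 hβΦ)).1 hwβ
    nlinarith
  have hne : -R.s β α ≠ β := fun h => by
    rw [neg_eq_iff_eq_neg, ← R.s_self hβΦ] at h
    rw [(R.s β).injective h] at hwα
    exact R.neg_notMem_pos hwα hwβ
  simp only [Finset.mem_coe, Finset.mem_erase, Finset.mem_inter, mem_inversions, map_neg, neg_neg,
    R.s_s_apply hβΦ]
  exact ⟨hne, ⟨hσα, hwσα⟩, hσα, hαP⟩

lemma lenW_mul_s_lt (hw : w ∈ R.W) (hβ : β ∈ R.pos) (hwβ : -(w β) ∈ R.pos) :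
    R.lenW (w * R.s β) < R.lenW w := by
  have hβΦ := R.pos_subset hβ
  rw [lenW_eq_card_inversions, lenW_eq_card_inversions,
    ← Finset.card_inter_add_card_sdiff (R.inversions (w * R.s β)) (R.inversions (R.s β)),
    ← Finset.card_inter_add_card_sdiff (R.inversions w) (R.inversions (R.s β)),
    R.card_inversions_mul_s_inter hw hβΦ, R.card_inversions_mul_s_sdiff hβΦ]
  exact Nat.add_lt_add_right (R.card_sdiff_inversions_lt hw hβ hwβ) _

lemma coroot_lt_zero_of_mem_inversions {lam : X} {v : AddAut X} (hv : v ∈ R.W)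
    (hdom : R.IsDominant (v lam))
    (hmin : ∀ u : AddAut X, u ∈ R.W → R.IsDominant (u lam) → R.lenW v ≤ R.lenW u)
    (hα : α ∈ R.inversions v) : R.coroot α lam < 0 := by
  obtain ⟨hαP, hvα⟩ := R.mem_inversions.1 hα
  have hαΦ := R.pos_subset hαP
  have hle : R.coroot α lam ≤ 0 := by
    have := hdom _ hvα
    rwa [R.coroot_neg ((R.map_mem_iff hv α).2 hαΦ), R.coroot_map hv hαΦ, neg_nonneg] at this
  refine hle.lt_of_ne fun h0 => ?_
  have hfix : (v * R.s α) lam = v lam := by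
    rw [mul_apply, R.s_apply α hαΦ, h0, zero_smul, sub_zero]
  exact (hmin _ (mul_mem hv (R.s_mem_W hαΦ)) (hfix ▸ hdom)).not_gt (R.lenW_mul_s_lt hv hαP hvα)

lemma lenAff_eq_lenT_sub_lenW (hw : w ∈ R.W) {lam : X}
    (h : ∀ α ∈ R.inversions w, R.coroot α lam < 0) :
    (R.lenAff w lam : ℤ) = R.lenT lam - R.lenW w := by
  have hsplit :
      R.pos.filter (fun α => w α ∈ R.pos) = R.pos.filter (fun α => ¬ -(w α) ∈ R.pos) :=
    Finset.filter_congr fun α hα => by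
      rw [R.neg_mem_pos_iff_notMem_pos ((R.map_mem_iff hw α).2 (R.pos_subset hα)), not_not]
  have hterm : ∀ α ∈ R.pos.filter fun α => -(w α) ∈ R.pos,
      |1 + R.coroot α lam| = |R.coroot α lam| - 1 := fun α hα => by
    rw [abs_of_neg (h α hα), abs_of_nonpos (by linarith [h α hα])]
    ring
  rw [lenAff, lenT, lenW, hsplit]
  push_cast
  rw [← Finset.sum_filter_add_sum_filter_not R.pos (fun α => -(w α) ∈ R.pos),
    Finset.sum_congr rfl hterm, Finset.sum_sub_distrib, Finset.sum_const, nsmul_one]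
  ring

end Inversions

end RootSystemData

/-- Let `λ ∈ X` and let `v ∈ W` be an element of minimal length `ℓ(v)` such that `vλ` is
dominant.  Then `v t_λ = t_{vλ} v` in `W_aff`, and `ℓ(v t_λ) = ℓ(t_λ) − ℓ(v)`. -/
theorem w_lambda_eq_and_length
    {X : Type*} [AddCommGroup X] [Module.Free ℤ X] [Module.Finite ℤ X] [DecidableEq X]
    (R : RootSystemData X) (lam : X) (v : AddAut X) (hv : v ∈ R.W)
    (hdom : R.IsDominant (v lam))
    (hmin : ∀ u : AddAut X, u ∈ R.W → R.IsDominant (u lam) → R.lenW v ≤ R.lenW u) :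
    waffMul (v, (0 : X)) ((1 : AddAut X), lam) = waffMul ((1 : AddAut X), v lam) (v, (0 : X)) ∧
      (R.lenAff v lam : ℤ) = (R.lenT lam : ℤ) - R.lenW v := by
  refine ⟨?_, R.lenAff_eq_lenT_sub_lenW hv fun α hα =>
    R.coroot_lt_zero_of_mem_inversions hv hdom hmin hα⟩
  simp [waffMul]
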